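/- arXiv:2205.08295 — 6 statements merged into one kernel-verified Lean document; each statement's English description precedes it below -/
import Mathlib

section
/- Let d, n ≥ 1 be integers, λ > 0, let (l_{jk})_{1≤j,k≤n} be real numbers with l_{kk} > 0 for all k, and fix j with Σ_{k≠j} l_{jk}²/(l_{jj} l_{kk}) ≤ 1. For each k let B_k ∈ ℝ^{d×d} be a symmetric matrix such that B_k − λ l_{kk} I_d is positive semidefinite (so each B_k is positive definite), and set Γ_j = B_j + λ² Σ_{k≠j} l_{jk}² B_k^{-1} (positive definite). Then for all x, y ∈ ℝ^d, xᵀ B_j^{-1} y ≤ √2 · ‖x‖_{Γ_j^{-1}} · ‖y‖_{B_j^{-1}}. -/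
/-!
From `B k ⪰ λ l_kk I` we get `B k⁻¹ ⪯ (λ l_kk)⁻¹ I`, so the weight condition bounds the
correction term of `Γ` by `λ l_jj I ⪯ B j`; hence `Γ ⪯ 2 B j`. Inversion is antitone on positive
definite matrices, so `B j⁻¹ ⪯ 2 Γ⁻¹`, and Cauchy–Schwarz for the form of `B j⁻¹` concludes.
-/

open Matrix Finset
open scoped MatrixOrder

namespace Matrix

lemma posDef_of_smul_one_le {ι : Type*} [DecidableEq ι] {B : Matrix ι ι ℝ} {c : ℝ} (hc : 0 < c)
    (h : c • 1 ≤ B) : B.PosDef := by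
  simpa using (PosDef.one.smul hc).add_posSemidef (le_iff.mp h)

variable {ι : Type*} [Fintype ι]

lemma IsHermitian.dotProduct_mulVec_comm {M : Matrix ι ι ℝ} (hM : M.IsHermitian) (x y : ι → ℝ) :
    x ⬝ᵥ M *ᵥ y = y ⬝ᵥ M *ᵥ x := by
  have hMt : Mᵀ = M := by simpa [conjTranspose_eq_transpose_of_trivial] using hM.eq
  rw [dotProduct_mulVec, ← mulVec_transpose, hMt, dotProduct_comm]

lemma dotProduct_mulVec_le_of_le {A B : Matrix ι ι ℝ} (h : A ≤ B) (x : ι → ℝ) :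
    x ⬝ᵥ A *ᵥ x ≤ x ⬝ᵥ B *ᵥ x := by
  have := (le_iff.mp h).dotProduct_mulVec_nonneg x
  rw [star_trivial, sub_mulVec, dotProduct_sub] at this
  linarith

variable [DecidableEq ι]

lemma PosSemidef.dotProduct_mulVec_le_sqrt_mul_sqrt {M : Matrix ι ι ℝ} (hM : M.PosSemidef)
    (x y : ι → ℝ) : x ⬝ᵥ M *ᵥ y ≤ √(x ⬝ᵥ M *ᵥ x) * √(y ⬝ᵥ M *ᵥ y) := by
  have hcs := LinearMap.BilinForm.apply_mul_apply_le_of_forall_zero_le (toLinearMap₂' ℝ M)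
    (fun z => by simpa [toLinearMap₂'_apply'] using hM.dotProduct_mulVec_nonneg z) x y
  simp only [toLinearMap₂'_apply', hM.isHermitian.dotProduct_mulVec_comm y x, ← sq] at hcs
  rw [← Real.sqrt_mul (by simpa using hM.dotProduct_mulVec_nonneg x)]
  exact (le_abs_self _).trans (Real.abs_le_sqrt hcs)

/-- The concave quadratic `u ↦ 2 ⟪u, x⟫ - uᵀ A u` is maximised at `u = A⁻¹ x`. -/
lemma PosDef.two_mul_dotProduct_sub_le {A : Matrix ι ι ℝ} (hA : A.PosDef) (x u : ι → ℝ) :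
    2 * (u ⬝ᵥ x) - u ⬝ᵥ A *ᵥ u ≤ x ⬝ᵥ A⁻¹ *ᵥ x := by
  set v := A⁻¹ *ᵥ x
  have hAv : A *ᵥ v = x := by
    rw [mulVec_mulVec, mul_nonsing_inv _ hA.det_pos.ne'.isUnit, one_mulVec]
  have h := hA.posSemidef.dotProduct_mulVec_nonneg (u - v)
  rw [star_trivial, mulVec_sub, dotProduct_sub, sub_dotProduct, sub_dotProduct, hAv,
    hA.isHermitian.dotProduct_mulVec_comm v u, hAv, dotProduct_comm v x] at h
  linarith

lemma PosDef.inv_le_inv {A B : Matrix ι ι ℝ} (hA : A.PosDef) (hAB : A ≤ B) : B⁻¹ ≤ A⁻¹ := by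
  have hB : B.PosDef := by simpa using hA.add_posSemidef (le_iff.mp hAB)
  refine le_iff.mpr <| .of_dotProduct_mulVec_nonneg
    (hA.isHermitian.inv.sub hB.isHermitian.inv) fun x => ?_
  set u := B⁻¹ *ᵥ x
  have hBu : B *ᵥ u = x := by
    rw [mulVec_mulVec, mul_nonsing_inv _ hB.det_pos.ne'.isUnit, one_mulVec]
  have hvar := hA.two_mul_dotProduct_sub_le x u
  have hAB' := dotProduct_mulVec_le_of_le hAB u
  have hux : u ⬝ᵥ x = x ⬝ᵥ B⁻¹ *ᵥ x := dotProduct_comm _ _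
  rw [hBu] at hAB'
  rw [star_trivial, sub_mulVec, dotProduct_sub]
  linarith

lemma inv_le_inv_smul_one {B : Matrix ι ι ℝ} {c : ℝ} (hc : 0 < c) (h : c • 1 ≤ B) :
    B⁻¹ ≤ c⁻¹ • 1 := by
  have hinv : (c • 1 : Matrix ι ι ℝ)⁻¹ = c⁻¹ • 1 := by
    refine inv_eq_right_inv ?_
    rw [smul_mul_smul_comm, one_mul, mul_inv_cancel₀ hc.ne', one_smul]
  simpa [hinv] using (PosDef.one.smul hc).inv_le_inv h

lemma add_sum_smul_inv_le_two_smul {κ : Type*} (s : Finset κ) (B : κ → Matrix ι ι ℝ)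
    (a c : κ → ℝ) (j : κ) (ha : ∀ k ∈ s, 0 ≤ a k) (hc : ∀ k ∈ s, 0 < c k)
    (hB : ∀ k, c k • 1 ≤ B k) (hsum : ∑ k ∈ s, a k / c k ≤ c j) :
    B j + ∑ k ∈ s, a k • (B k)⁻¹ ≤ (2 : ℝ) • B j := by
  calc B j + ∑ k ∈ s, a k • (B k)⁻¹
      ≤ B j + ∑ k ∈ s, (a k / c k) • (1 : Matrix ι ι ℝ) := by
        gcongr with k hk
        rw [div_eq_mul_inv, mul_smul]
        exact smul_le_smul_of_nonneg_left (inv_le_inv_smul_one (hc k hk) (hB k)) (ha k hk)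
    _ = B j + (∑ k ∈ s, a k / c k) • (1 : Matrix ι ι ℝ) := by rw [sum_smul]
    _ ≤ B j + c j • (1 : Matrix ι ι ℝ) := by gcongr
    _ ≤ (2 : ℝ) • B j := by rw [two_smul]; gcongr; exact hB j

end Matrix

theorem stmt_0_general (d n : ℕ) (lam : ℝ) (hlam : 0 < lam)
    (l : Fin n → Fin n → ℝ) (hl : ∀ k, 0 < l k k) (j : Fin n)
    (hsum : ∑ k ∈ Finset.univ.erase j, (l j k) ^ 2 / (l j j * l k k) ≤ 1)
    (B : Fin n → Matrix (Fin d) (Fin d) ℝ)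
    (hB : ∀ k, (B k - (lam * l k k) • (1 : Matrix (Fin d) (Fin d) ℝ)).PosSemidef)
    (Γ : Matrix (Fin d) (Fin d) ℝ)
    (hΓ : Γ = B j + lam ^ 2 • ∑ k ∈ Finset.univ.erase j, (l j k) ^ 2 • (B k)⁻¹)
    (x y : Fin d → ℝ) :
    x ⬝ᵥ (B j)⁻¹.mulVec y ≤
      Real.sqrt 2 * Real.sqrt (x ⬝ᵥ Γ⁻¹.mulVec x) * Real.sqrt (y ⬝ᵥ (B j)⁻¹.mulVec y) := by
  have hc : ∀ k, 0 < lam * l k k := fun k => mul_pos hlam (hl k)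
  have hPD : ∀ k, (B k).PosDef := fun k => posDef_of_smul_one_le (hc k) (hB k)
  have hweights : ∑ k ∈ univ.erase j, lam ^ 2 * l j k ^ 2 / (lam * l k k) ≤ lam * l j j :=
    calc ∑ k ∈ univ.erase j, lam ^ 2 * l j k ^ 2 / (lam * l k k)
        = lam * l j j * ∑ k ∈ univ.erase j, l j k ^ 2 / (l j j * l k k) := by
          rw [mul_sum]
          refine sum_congr rfl fun k _ => ?_
          field_simp [hlam.ne', (hl j).ne', (hl k).ne']
      _ ≤ lam * l j j := mul_le_of_le_one_right (hc j).le hsum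
  have hΓ_eq : Γ = B j + ∑ k ∈ univ.erase j, (lam ^ 2 * l j k ^ 2) • (B k)⁻¹ := by
    simp only [hΓ, smul_sum, mul_smul]
  have hΓ_le : Γ ≤ (2 : ℝ) • B j := hΓ_eq ▸ add_sum_smul_inv_le_two_smul _ B _ _ j
    (fun k _ => by positivity) (fun k _ => hc k) hB hweights
  have hΓ_PD : Γ.PosDef := hΓ_eq ▸ (hPD j).add_posSemidef
    (posSemidef_sum _ fun k _ => (hPD k).inv.posSemidef.smul (by positivity))
  have hquad : x ⬝ᵥ (B j)⁻¹ *ᵥ x ≤ 2 * (x ⬝ᵥ Γ⁻¹ *ᵥ x) := by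
    have h := dotProduct_mulVec_le_of_le (hΓ_PD.inv_le_inv hΓ_le) x
    rw [inv_smul _ _ (hPD j).det_pos.ne'.isUnit, invOf_eq_inv, smul_mulVec, dotProduct_smul,
      smul_eq_mul] at h
    linarith
  calc x ⬝ᵥ (B j)⁻¹ *ᵥ y ≤ √(x ⬝ᵥ (B j)⁻¹ *ᵥ x) * √(y ⬝ᵥ (B j)⁻¹ *ᵥ y) :=
        (hPD j).inv.posSemidef.dotProduct_mulVec_le_sqrt_mul_sqrt x y
    _ ≤ √(2 * (x ⬝ᵥ Γ⁻¹ *ᵥ x)) * √(y ⬝ᵥ (B j)⁻¹ *ᵥ y) := by gcongr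
    _ = √2 * √(x ⬝ᵥ Γ⁻¹ *ᵥ x) * √(y ⬝ᵥ (B j)⁻¹ *ᵥ y) := by rw [Real.sqrt_mul zero_le_two]

/-- Lemma 3.1 (Lemma `Gamma`) of the paper. -/
theorem stmt_0 (d n : ℕ) (hd : 1 ≤ d) (hn : 1 ≤ n) (lam : ℝ) (hlam : 0 < lam)
    (l : Fin n → Fin n → ℝ) (hl : ∀ k, 0 < l k k) (j : Fin n)
    (hsum : ∑ k ∈ Finset.univ.erase j, (l j k) ^ 2 / (l j j * l k k) ≤ 1)
    (B : Fin n → Matrix (Fin d) (Fin d) ℝ)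
    (hB : ∀ k, (B k - (lam * l k k) • (1 : Matrix (Fin d) (Fin d) ℝ)).PosSemidef)
    (Γ : Matrix (Fin d) (Fin d) ℝ)
    (hΓ : Γ = B j + lam ^ 2 • ∑ k ∈ Finset.univ.erase j, (l j k) ^ 2 • (B k)⁻¹)
    (x y : Fin d → ℝ) :
    x ⬝ᵥ (B j)⁻¹.mulVec y ≤
      Real.sqrt 2 * Real.sqrt (x ⬝ᵥ Γ⁻¹.mulVec x) * Real.sqrt (y ⬝ᵥ (B j)⁻¹.mulVec y) :=
  stmt_0_general d n lam hlam l hl j hsum B hB Γ hΓ x y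
end

section
/- Let d, n ≥ 1 be integers, λ > 0, let (l_{jk})_{1≤j,k≤n} be real numbers with l_{kk} > 0 for all k, and fix j with Σ_{k≠j} l_{jk}²/(l_{jj} l_{kk}) ≤ 1. For each k let B_k ∈ ℝ^{d×d} be a symmetric matrix such that B_k − λ l_{kk} I_d is positive semidefinite (so each B_k is positive definite), and set Γ_j = B_j + λ² Σ_{k≠j} l_{jk}² B_k^{-1}. Then for every y ∈ ℝ^d, yᵀ B_j^{-1} Γ_j B_j^{-1} y ≤ 2 · yᵀ B_j^{-1} y. -/
open Matrix Finset

/-! With `x = B_j⁻¹ y` the claim reads `xᵀ Γ_j x ≤ 2 xᵀ B_j x`. Since `B_k ⪰ λ l_kk I`, we have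
`xᵀ B_k⁻¹ x ≤ ‖x‖² / (λ l_kk)`, so the correction term `λ² Σ_{k≠j} l_jk² xᵀ B_k⁻¹ x` is at most
`λ l_jj ‖x‖² Σ_{k≠j} l_jk² / (l_jj l_kk) ≤ λ l_jj ‖x‖² ≤ xᵀ B_j x`. -/

namespace Matrix

lemma dotProduct_transpose_mul_mul_mulVec {ι m α : Type*} [Fintype ι] [Fintype m] [CommSemiring α]
    (M : Matrix m ι α) (N : Matrix m m α) (y : ι → α) :
    y ⬝ᵥ (Mᵀ * N * M) *ᵥ y = (M *ᵥ y) ⬝ᵥ N *ᵥ (M *ᵥ y) := by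
  rw [← mulVec_mulVec, ← mulVec_mulVec, dotProduct_mulVec, vecMul_transpose]

variable {ι : Type*} [DecidableEq ι] {A : Matrix ι ι ℝ} {c : ℝ}

lemma PosSemidef.posDef_of_sub_smul_one (hA : (A - c • 1).PosSemidef) (hc : 0 < c) :
    A.PosDef := by
  simpa using PosDef.posSemidef_add hA (PosDef.one.smul hc)

variable [Fintype ι]

lemma PosSemidef.mul_dotProduct_self_le_of_sub_smul_one (hA : (A - c • 1).PosSemidef)
    (x : ι → ℝ) : c * (x ⬝ᵥ x) ≤ x ⬝ᵥ A *ᵥ x := by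
  simpa only [sub_mulVec, dotProduct_sub, smul_mulVec, one_mulVec, dotProduct_smul, star_trivial,
    smul_eq_mul, sub_nonneg] using hA.dotProduct_mulVec_nonneg x

/- With `z = A⁻¹ *ᵥ x`, the bound `c • 1 ⪯ A` gives `c (z ⬝ z) ≤ x ⬝ z`, and expanding
`0 ≤ ‖x - c z‖²` then yields `c (x ⬝ z) ≤ x ⬝ x`. -/
lemma PosSemidef.dotProduct_inv_mulVec_le_of_sub_smul_one (hA : (A - c • 1).PosSemidef)
    (hc : 0 < c) (x : ι → ℝ) : x ⬝ᵥ A⁻¹ *ᵥ x ≤ c⁻¹ * (x ⬝ᵥ x) := by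
  have hAinv : A * A⁻¹ = 1 :=
    mul_nonsing_inv A ((hA.posDef_of_sub_smul_one hc).det_pos.ne'.isUnit)
  set z := A⁻¹ *ᵥ x
  have hAz : A *ᵥ z = x := by rw [mulVec_mulVec, hAinv, one_mulVec]
  have hzz : c * (z ⬝ᵥ z) ≤ x ⬝ᵥ z := by
    simpa only [hAz, dotProduct_comm z x] using hA.mul_dotProduct_self_le_of_sub_smul_one z
  have hsq : 0 ≤ (x - c • z) ⬝ᵥ (x - c • z) := by
    simpa only [star_trivial] using dotProduct_star_self_nonneg (x - c • z)
  simp only [sub_dotProduct, dotProduct_sub, smul_dotProduct, dotProduct_smul, smul_eq_mul,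
    dotProduct_comm z x] at hsq
  rw [inv_mul_eq_div, le_div_iff₀ hc]
  nlinarith

lemma dotProduct_sum_smul_inv_mulVec_le {κ : Type*} (s : Finset κ) {w c : κ → ℝ}
    {B : κ → Matrix ι ι ℝ} (hw : ∀ k ∈ s, 0 ≤ w k) (hc : ∀ k ∈ s, 0 < c k)
    (hB : ∀ k ∈ s, (B k - c k • 1).PosSemidef) (x : ι → ℝ) :
    x ⬝ᵥ (∑ k ∈ s, w k • (B k)⁻¹) *ᵥ x ≤ (∑ k ∈ s, w k / c k) * (x ⬝ᵥ x) := by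
  rw [sum_mulVec, dotProduct_sum, Finset.sum_mul]
  gcongr with k hk
  rw [smul_mulVec, dotProduct_smul, smul_eq_mul, div_eq_mul_inv, mul_assoc]
  exact mul_le_mul_of_nonneg_left
    ((hB k hk).dotProduct_inv_mulVec_le_of_sub_smul_one (hc k hk) x) (hw k hk)

end Matrix

theorem stmt_1_general (d n : ℕ) (lam : ℝ) (hlam : 0 < lam)
    (l : Fin n → Fin n → ℝ) (hl : ∀ k, 0 < l k k) (j : Fin n)
    (hsum : ∑ k ∈ Finset.univ.erase j, (l j k) ^ 2 / (l j j * l k k) ≤ 1)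
    (B : Fin n → Matrix (Fin d) (Fin d) ℝ)
    (hB : ∀ k, (B k - (lam * l k k) • (1 : Matrix (Fin d) (Fin d) ℝ)).PosSemidef)
    (Γ : Matrix (Fin d) (Fin d) ℝ)
    (hΓ : Γ = B j + lam ^ 2 • ∑ k ∈ Finset.univ.erase j, (l j k) ^ 2 • (B k)⁻¹)
    (y : Fin d → ℝ) :
    y ⬝ᵥ ((B j)⁻¹ * Γ * (B j)⁻¹).mulVec y ≤ 2 * (y ⬝ᵥ (B j)⁻¹.mulVec y) := by
  have hc : ∀ k, 0 < lam * l k k := fun k => mul_pos hlam (hl k)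
  have hBj : (B j).PosDef := (hB j).posDef_of_sub_smul_one (hc j)
  set x := (B j)⁻¹ *ᵥ y
  have hsand : y ⬝ᵥ ((B j)⁻¹ * Γ * (B j)⁻¹) *ᵥ y = x ⬝ᵥ Γ *ᵥ x := by
    have hsymm : ((B j)⁻¹).IsSymm := by simpa using hBj.isHermitian.inv
    simpa only [hsymm.eq] using dotProduct_transpose_mul_mul_mulVec (B j)⁻¹ Γ y
  have hy : y ⬝ᵥ (B j)⁻¹ *ᵥ y = x ⬝ᵥ B j *ᵥ x := by
    rw [mulVec_mulVec, mul_nonsing_inv _ hBj.det_pos.ne'.isUnit, one_mulVec, dotProduct_comm]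
  have hweights : ∑ k ∈ univ.erase j, l j k ^ 2 / (lam * l k k) ≤ l j j / lam := by
    calc ∑ k ∈ univ.erase j, l j k ^ 2 / (lam * l k k)
        = l j j / lam * ∑ k ∈ univ.erase j, l j k ^ 2 / (l j j * l k k) := by
          rw [mul_sum]
          refine sum_congr rfl fun k _ => ?_
          field_simp [(hl j).ne']
      _ ≤ l j j / lam := mul_le_of_le_one_right (div_pos (hl j) hlam).le hsum
  have hinv := dotProduct_sum_smul_inv_mulVec_le (univ.erase j) (w := fun k => l j k ^ 2)
    (fun _ _ => sq_nonneg _) (fun k _ => hc k) (fun k _ => hB k) x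
  have hBx := (hB j).mul_dotProduct_self_le_of_sub_smul_one x
  have hxx : 0 ≤ x ⬝ᵥ x := by simpa only [star_trivial] using dotProduct_star_self_nonneg x
  rw [hsand, hy, hΓ, add_mulVec, dotProduct_add, smul_mulVec, dotProduct_smul, smul_eq_mul]
  calc x ⬝ᵥ B j *ᵥ x + lam ^ 2 * x ⬝ᵥ (∑ k ∈ univ.erase j, l j k ^ 2 • (B k)⁻¹) *ᵥ x
      ≤ x ⬝ᵥ B j *ᵥ x + lam ^ 2 * (l j j / lam * (x ⬝ᵥ x)) := by
        gcongr
        exact hinv.trans (mul_le_mul_of_nonneg_right hweights hxx)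
    _ = x ⬝ᵥ B j *ᵥ x + lam * l j j * (x ⬝ᵥ x) := by field_simp
    _ ≤ 2 * (x ⬝ᵥ B j *ᵥ x) := by linarith

/-- key inequality `B_j⁻¹ Γ_j ⪯ 2 I` in quadratic-form form. -/
theorem stmt_1 (d n : ℕ) (hd : 1 ≤ d) (hn : 1 ≤ n) (lam : ℝ) (hlam : 0 < lam)
    (l : Fin n → Fin n → ℝ) (hl : ∀ k, 0 < l k k) (j : Fin n)
    (hsum : ∑ k ∈ Finset.univ.erase j, (l j k) ^ 2 / (l j j * l k k) ≤ 1)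
    (B : Fin n → Matrix (Fin d) (Fin d) ℝ)
    (hB : ∀ k, (B k - (lam * l k k) • (1 : Matrix (Fin d) (Fin d) ℝ)).PosSemidef)
    (Γ : Matrix (Fin d) (Fin d) ℝ)
    (hΓ : Γ = B j + lam ^ 2 • ∑ k ∈ Finset.univ.erase j, (l j k) ^ 2 • (B k)⁻¹)
    (y : Fin d → ℝ) :
    y ⬝ᵥ ((B j)⁻¹ * Γ * (B j)⁻¹).mulVec y ≤ 2 * (y ⬝ᵥ (B j)⁻¹.mulVec y) :=
  stmt_1_general d n lam hlam l hl j hsum B hB Γ hΓ y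
end

section
/- Consider the multi-user deterministic setup: integers d, n ≥ 1, a real λ > 0, real numbers l_{jk} (1 ≤ j,k ≤ n) with l_{kk} > 0 for all k; for each user k a finite index set T_k and, for each τ ∈ T_k, vectors b_{k,τ}, b̄_{k,τ} ∈ ℝ^d, reals ν_{k,τ}, η_{k,τ}, and a symmetric positive semidefinite matrix E_{k,τ} ∈ ℝ^{d×d}; and vectors μ_1,…,μ_n ∈ ℝ^d. Define X_{k,τ} = b_{k,τ} − b̄_{k,τ}, r_{k,τ} = ν_{k,τ} + b_{k,τ}ᵀ μ_k + η_{k,τ}, B_k = Σ_{τ∈T_k}(X_{k,τ} X_{k,τ}ᵀ + E_{k,τ}) + λ l_{kk} I_d (positive definite), μ̄_k = B_k^{-1} Σ_{τ∈T_k} 2 X_{k,τ} r_{k,τ}, A_k = (Σ_{τ∈T_k}(X_{k,τ} X_{k,τ}ᵀ − E_{k,τ})) μ_k + Σ_{τ∈T_k} 2 X_{k,τ}(ν_{k,τ} + b̄_{k,τ}ᵀ μ_k), and for a fixed user j, μ̂_j = μ̄_j − λ B_j^{-1} Σ_{k≠j} l_{jk} μ̄_k. Then μ̂_j − μ_j =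 B_j^{-1} [ −λ Σ_{k=1}^n l_{jk} μ_k + λ² Σ_{k≠j} l_{jk} l_{kk} B_k^{-1} μ_k + Σ_{τ∈T_j} 2 X_{j,τ} η_{j,τ} − λ Σ_{k≠j} l_{jk} B_k^{-1} Σ_{τ∈T_k} 2 X_{k,τ} η_{k,τ} + A_j − λ Σ_{k≠j} l_{jk} B_k^{-1} A_k ]. -/
/-!
Since `X = b - b̄` and `r = ν + bᵀμ + η`, each summand `2 r X` splits as
`(XXᵀ + E) μ + (XXᵀ - E) μ + 2 (ν + b̄ᵀμ) X + 2 η X`, so that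
`Σ 2 r_k X_k = B_k μ_k - λ l_kk μ_k + A_k + Σ 2 η_k X_k`. As `B_k` is positive definite,
`μ̄_k = μ_k + B_k⁻¹ (-λ l_kk μ_k + A_k + Σ 2 η_k X_k)` for every user. Substituting this into
`μ̂_j` and splitting the term `k = j` off `Σ_k l_jk μ_k` leaves a linear identity.
-/

open Matrix Finset

namespace Matrix

variable {m ι : Type*} [Fintype m]

theorem posDef_sum_vecMulVec_add_smul_one [DecidableEq m] (s : Finset ι)
    (x : ι → m → ℝ) (E : ι → Matrix m m ℝ) (hE : ∀ i ∈ s, (E i).PosSemidef) {c : ℝ}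
    (hc : 0 < c) :
    (∑ i ∈ s, (vecMulVec (x i) (x i) + E i) + c • (1 : Matrix m m ℝ)).PosDef := by
  have hsum : (∑ i ∈ s, (vecMulVec (x i) (x i) + E i)).PosSemidef :=
    posSemidef_sum s fun i hi => (posSemidef_vecMulVec_self_star (x i)).add (hE i hi)
  exact PosDef.posSemidef_add hsum (PosDef.one.smul hc)

theorem inv_mulVec_mulVec_add {R : Type*} [CommRing R] [DecidableEq m] {B : Matrix m m R}
    (hB : IsUnit B.det) (u v : m → R) : B⁻¹ *ᵥ (B *ᵥ u + v) = u + B⁻¹ *ᵥ v := by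
  rw [mulVec_add, mulVec_mulVec, nonsing_inv_mul B hB, one_mulVec]

theorem smul_sub_eq_mulVec_add {R : Type*} [CommRing R] (b bbar μ : m → R) (E : Matrix m m R)
    (ν η : R) :
    (2 * (ν + b ⬝ᵥ μ + η)) • (b - bbar) =
      (vecMulVec (b - bbar) (b - bbar) + E) *ᵥ μ + (vecMulVec (b - bbar) (b - bbar) - E) *ᵥ μ
        + (2 * (ν + bbar ⬝ᵥ μ)) • (b - bbar) + (2 * η) • (b - bbar) := by
  rw [add_mulVec, sub_mulVec, vecMulVec_mulVec, op_smul_eq_smul, sub_dotProduct]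
  module

theorem sum_smul_eq_mulVec_add {R : Type*} [CommRing R] [DecidableEq m] (s : Finset ι)
    (X b bbar : ι → m → R) (hX : ∀ τ, X τ = b τ - bbar τ) (E : ι → Matrix m m R)
    (ν η : ι → R) (μ : m → R) (c : R) :
    ∑ τ ∈ s, (2 * (ν τ + b τ ⬝ᵥ μ + η τ)) • X τ =
      (∑ τ ∈ s, (vecMulVec (X τ) (X τ) + E τ) + c • 1) *ᵥ μ +
        (-c • μ + ((∑ τ ∈ s, (vecMulVec (X τ) (X τ) - E τ)) *ᵥ μ +
          ∑ τ ∈ s, (2 * (ν τ + bbar τ ⬝ᵥ μ)) • X τ) + ∑ τ ∈ s, (2 * η τ) • X τ) := by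
  have hterm : ∀ τ, (2 * (ν τ + b τ ⬝ᵥ μ + η τ)) • X τ =
      (vecMulVec (X τ) (X τ) + E τ) *ᵥ μ + (vecMulVec (X τ) (X τ) - E τ) *ᵥ μ
        + (2 * (ν τ + bbar τ ⬝ᵥ μ)) • X τ + (2 * η τ) • X τ := fun τ =>
    hX τ ▸ smul_sub_eq_mulVec_add (b τ) (bbar τ) μ (E τ) (ν τ) (η τ)
  simp only [hterm, add_mulVec, sum_mulVec, smul_mulVec, one_mulVec, sum_add_distrib]
  module

theorem sub_eq_mulVec_of_eq_add_mulVec {κ R : Type*} [Fintype κ] [DecidableEq κ] [CommRing R]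
    (C : κ → Matrix m m R) (μ mubar A N : κ → m → R) (lam : R) (l : κ → κ → R)
    (h : ∀ k, mubar k = μ k + C k *ᵥ (-(lam * l k k) • μ k + A k + N k)) (j : κ) :
    mubar j - lam • C j *ᵥ (∑ k ∈ univ.erase j, l j k • mubar k) - μ j = C j *ᵥ (
      -(lam • ∑ k, l j k • μ k)
      + lam ^ 2 • ∑ k ∈ univ.erase j, (l j k * l k k) • C k *ᵥ μ k
      + N j
      - lam • ∑ k ∈ univ.erase j, l j k • C k *ᵥ N k
      + A j
      - lam • ∑ k ∈ univ.erase j, l j k • C k *ᵥ A k) := by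
  have hcoef : ∀ k, lam ^ 2 * (l j k * l k k) = lam * (l j k * (lam * l k k)) :=
    fun k => by ring
  rw [← add_sum_erase univ _ (mem_univ j)]
  simp only [h, mulVec_add, mulVec_sub, mulVec_neg, mulVec_smul, mulVec_sum, smul_add, smul_neg,
    neg_smul, sum_add_distrib, sum_neg_distrib, smul_sum, smul_smul, hcoef]
  module

end Matrix

theorem stmt_7_general (d n : ℕ) (lam : ℝ) (hlam : 0 < lam)
    (l : Fin n → Fin n → ℝ) (hl : ∀ k, 0 < l k k)
    {ι : Type*} (T : Fin n → Finset ι)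
    (b bbar : Fin n → ι → Fin d → ℝ) (ν η : Fin n → ι → ℝ)
    (E : Fin n → ι → Matrix (Fin d) (Fin d) ℝ) (hE : ∀ k τ, (E k τ).PosSemidef)
    (μ : Fin n → Fin d → ℝ)
    (X : Fin n → ι → Fin d → ℝ) (hX : ∀ k τ, X k τ = b k τ - bbar k τ)
    (r : Fin n → ι → ℝ) (hr : ∀ k τ, r k τ = ν k τ + b k τ ⬝ᵥ μ k + η k τ)
    (B : Fin n → Matrix (Fin d) (Fin d) ℝ)
    (hB : ∀ k, B k = ∑ τ ∈ T k, (vecMulVec (X k τ) (X k τ) + E k τ) +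
      (lam * l k k) • (1 : Matrix (Fin d) (Fin d) ℝ))
    (mubar : Fin n → Fin d → ℝ)
    (hmubar : ∀ k, mubar k = (B k)⁻¹.mulVec (∑ τ ∈ T k, (2 * r k τ) • X k τ))
    (A : Fin n → Fin d → ℝ)
    (hA : ∀ k, A k = (∑ τ ∈ T k, (vecMulVec (X k τ) (X k τ) - E k τ)).mulVec (μ k) +
      ∑ τ ∈ T k, (2 * (ν k τ + bbar k τ ⬝ᵥ μ k)) • X k τ)
    (j : Fin n) (muhat : Fin d → ℝ)
    (hmuhat : muhat = mubar j -
      lam • (B j)⁻¹.mulVec (∑ k ∈ Finset.univ.erase j, l j k • mubar k)) :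
    muhat - μ j = (B j)⁻¹.mulVec (
      -(lam • ∑ k : Fin n, l j k • μ k)
      + lam ^ 2 • ∑ k ∈ Finset.univ.erase j, (l j k * l k k) • (B k)⁻¹.mulVec (μ k)
      + ∑ τ ∈ T j, (2 * η j τ) • X j τ
      - lam • ∑ k ∈ Finset.univ.erase j,
          l j k • (B k)⁻¹.mulVec (∑ τ ∈ T k, (2 * η k τ) • X k τ)
      + A j
      - lam • ∑ k ∈ Finset.univ.erase j, l j k • (B k)⁻¹.mulVec (A k)) := by
  have hmubar_eq : ∀ k, mubar k = μ k + (B k)⁻¹ *ᵥ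
      (-(lam * l k k) • μ k + A k + ∑ τ ∈ T k, (2 * η k τ) • X k τ) := by
    intro k
    have hunit : IsUnit (B k).det := by
      rw [hB k]
      exact (posDef_sum_vecMulVec_add_smul_one (T k) (X k) (E k) (fun τ _ => hE k τ)
        (mul_pos hlam (hl k))).det_pos.ne'.isUnit
    have hresp := sum_smul_eq_mulVec_add (T k) (X k) (b k) (bbar k) (hX k) (E k) (ν k) (η k)
      (μ k) (lam * l k k)
    rw [← hB k, ← hA k] at hresp
    simp only [hmubar k, hr, hresp, inv_mulVec_mulVec_add hunit]
  rw [hmuhat]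
  exact sub_eq_mulVec_of_eq_add_mulVec (fun k => (B k)⁻¹) μ mubar A _ lam l hmubar_eq j

/-- multi-user decomposition of the graph-adjusted estimator `μ̂_j − μ_j`. -/
theorem stmt_7 (d n : ℕ) (hd : 1 ≤ d) (hn : 1 ≤ n) (lam : ℝ) (hlam : 0 < lam)
    (l : Fin n → Fin n → ℝ) (hl : ∀ k, 0 < l k k)
    {ι : Type*} (T : Fin n → Finset ι)
    (b bbar : Fin n → ι → Fin d → ℝ) (ν η : Fin n → ι → ℝ)
    (E : Fin n → ι → Matrix (Fin d) (Fin d) ℝ) (hE : ∀ k τ, (E k τ).PosSemidef)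
    (μ : Fin n → Fin d → ℝ)
    (X : Fin n → ι → Fin d → ℝ) (hX : ∀ k τ, X k τ = b k τ - bbar k τ)
    (r : Fin n → ι → ℝ) (hr : ∀ k τ, r k τ = ν k τ + b k τ ⬝ᵥ μ k + η k τ)
    (B : Fin n → Matrix (Fin d) (Fin d) ℝ)
    (hB : ∀ k, B k = ∑ τ ∈ T k, (vecMulVec (X k τ) (X k τ) + E k τ) +
      (lam * l k k) • (1 : Matrix (Fin d) (Fin d) ℝ))
    (mubar : Fin n → Fin d → ℝ)
    (hmubar : ∀ k, mubar k = (B k)⁻¹.mulVec (∑ τ ∈ T k, (2 * r k τ) • X k τ))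
    (A : Fin n → Fin d → ℝ)
    (hA : ∀ k, A k = (∑ τ ∈ T k, (vecMulVec (X k τ) (X k τ) - E k τ)).mulVec (μ k) +
      ∑ τ ∈ T k, (2 * (ν k τ + bbar k τ ⬝ᵥ μ k)) • X k τ)
    (j : Fin n) (muhat : Fin d → ℝ)
    (hmuhat : muhat = mubar j -
      lam • (B j)⁻¹.mulVec (∑ k ∈ Finset.univ.erase j, l j k • mubar k)) :
    muhat - μ j = (B j)⁻¹.mulVec (
      -(lam • ∑ k : Fin n, l j k • μ k)
      + lam ^ 2 • ∑ k ∈ Finset.univ.erase j, (l j k * l k k) • (B k)⁻¹.mulVec (μ k)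
      + ∑ τ ∈ T j, (2 * η j τ) • X j τ
      - lam • ∑ k ∈ Finset.univ.erase j,
          l j k • (B k)⁻¹.mulVec (∑ τ ∈ T k, (2 * η k τ) • X k τ)
      + A j
      - lam • ∑ k ∈ Finset.univ.erase j, l j k • (B k)⁻¹.mulVec (A k)) :=
  stmt_7_general d n lam hlam l hl T b bbar ν η E hE μ X hX r hr B hB mubar hmubar A hA j muhat
    hmuhat
end

section
/- Let d ≥ 1 and T ≥ 0 be integers and let λ > 0 and l > 0 be reals. Let X_1,…,X_T ∈ ℝ^d and let E_1,…,E_T ∈ ℝ^{d×d} be symmetric positive semidefinite matrices. Define B(1) = λ l I_d and B(t+1) = B(t) + X_t X_tᵀ + E_t for t = 1,…,T (each B(t) is positive definite), and s_t = ‖X_t‖_{B(t)^{-1}}. Then log det(B(T+1)) ≥ d log(λ l) + Σ_{t=1}^T log(1 + s_t²). -/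
/-!
By the matrix determinant lemma, `det (B + x xᵀ) = det B · (1 + xᵀ B⁻¹ x)`, and adding a positive
semidefinite `E` to a positive definite `A` cannot decrease the determinant: with `S = √A`,
`det (A + E) = det A · det (1 + S⁻¹ E S⁻¹)`, and the eigenvalues of `1 + S⁻¹ E S⁻¹` are
at least `1`.
So each step multiplies `det B` by at least `1 + s_t²`; taking logarithms and telescoping from
`det (λ l I) = (λ l)^d` gives the bound.
-/

open Matrix Finset

theorem Matrix.posSemidef_vecMulVec_self {n : Type*} [Fintype n] (x : n → ℝ) :
    (vecMulVec x x).PosSemidef := by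
  simpa using posSemidef_vecMulVec_self_star x

section

variable {n : Type*} [Fintype n] [DecidableEq n]

theorem Matrix.det_add_vecMulVec {R : Type*} [CommRing R] {A : Matrix n n R} (hA : IsUnit A.det)
    (u v : n → R) : (A + vecMulVec u v).det = A.det * (1 + v ⬝ᵥ A⁻¹ *ᵥ u) := by
  rw [vecMulVec_eq (Fin 1), det_add_mul _ _ hA]
  congr 1
  rw [det_unique, ← replicateRow_vecMul, add_apply, one_apply_eq,
    replicateRow_mul_replicateCol_apply, dotProduct_mulVec]

theorem Matrix.PosSemidef.one_le_det_one_add {D : Matrix n n ℝ} (hD : D.PosSemidef) :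
    1 ≤ (1 + D).det := by
  have hspec : 1 + D = Unitary.conjStarAlgAut ℝ _ hD.1.eigenvectorUnitary
      (diagonal (1 + hD.1.eigenvalues)) := by
    conv_lhs => rw [hD.1.spectral_theorem]
    rw [← map_one (Unitary.conjStarAlgAut ℝ _ hD.1.eigenvectorUnitary), ← map_add, ← diagonal_one,
      diagonal_add]
    rfl
  rw [hspec, Unitary.conjStarAlgAut_apply, det_mul, det_mul, mul_right_comm, ← det_mul,
    Unitary.mul_star_self_of_mem (SetLike.coe_mem _), det_one, one_mul, det_diagonal]
  exact Finset.one_le_prod fun i _ => le_add_of_nonneg_right (hD.eigenvalues_nonneg i)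

open scoped MatrixOrder in
theorem Matrix.PosDef.det_le_det_add {A C : Matrix n n ℝ} (hA : A.PosDef) (hC : C.PosSemidef) :
    A.det ≤ (A + C).det := by
  set S := CFC.sqrt A
  have hS : S.PosSemidef := (CFC.sqrt_nonneg A).posSemidef
  have hSS : S * S = A := CFC.sqrt_mul_sqrt_self A hA.posSemidef.nonneg
  have hdet : S.det * S.det = A.det := by rw [← det_mul, hSS]
  have hSu : IsUnit S.det := isUnit_iff_ne_zero.mpr fun h => by
    rw [h, zero_mul] at hdet; exact hA.det_pos.ne' hdet.symm
  have hD : (S⁻¹ * C * S⁻¹).PosSemidef := by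
    simpa only [hS.1.inv.eq] using hC.conjTranspose_mul_mul_same S⁻¹
  have hfactor : A + C = S * (1 + S⁻¹ * C * S⁻¹) * S := by
    rw [Matrix.mul_add, Matrix.add_mul, Matrix.mul_one, hSS, ← Matrix.mul_assoc,
      mul_nonsing_inv_cancel_left _ _ hSu, Matrix.mul_assoc, nonsing_inv_mul _ hSu, Matrix.mul_one]
  calc A.det = A.det * 1 := (mul_one _).symm
    _ ≤ A.det * (1 + S⁻¹ * C * S⁻¹).det := by gcongr; exacts [hA.det_pos.le, hD.one_le_det_one_add]
    _ = (A + C).det := by rw [hfactor, det_mul, det_mul, ← hdet]; ring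

theorem Matrix.PosDef.det_mul_one_add_le_det_add_vecMulVec_add {B E : Matrix n n ℝ} (hB : B.PosDef)
    (hE : E.PosSemidef) (x : n → ℝ) :
    B.det * (1 + x ⬝ᵥ B⁻¹ *ᵥ x) ≤ (B + vecMulVec x x + E).det := by
  rw [← det_add_vecMulVec hB.det_pos.ne'.isUnit]
  exact (hB.add_posSemidef (posSemidef_vecMulVec_self x)).det_le_det_add hE

end

theorem stmt_10_general (d T : ℕ) (lam l : ℝ) (hlam : 0 < lam) (hl : 0 < l)
    (X : ℕ → Fin d → ℝ) (E : ℕ → Matrix (Fin d) (Fin d) ℝ) (hE : ∀ t, (E t).PosSemidef)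
    (B : ℕ → Matrix (Fin d) (Fin d) ℝ)
    (hB0 : B 0 = (lam * l) • (1 : Matrix (Fin d) (Fin d) ℝ))
    (hBs : ∀ t, B (t + 1) = B t + vecMulVec (X t) (X t) + E t)
    (s : ℕ → ℝ) (hs : ∀ t, s t = Real.sqrt (X t ⬝ᵥ (B t)⁻¹.mulVec (X t))) :
    (d : ℝ) * Real.log (lam * l) + ∑ t ∈ Finset.range T, Real.log (1 + s t ^ 2) ≤
      Real.log (B T).det := by
  have hBpos : ∀ t, (B t).PosDef := by
    intro t
    induction t with
    | zero => rw [hB0]; exact PosDef.one.smul (mul_pos hlam hl)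
    | succ t ih =>
      rw [hBs t]
      exact (ih.add_posSemidef (posSemidef_vecMulVec_self (X t))).add_posSemidef (hE t)
  have hstep : ∀ t, Real.log (B t).det + Real.log (1 + s t ^ 2) ≤ Real.log (B (t + 1)).det := by
    intro t
    have hq : 0 ≤ X t ⬝ᵥ (B t)⁻¹ *ᵥ X t := by
      simpa using (hBpos t).inv.posSemidef.dotProduct_mulVec_nonneg (X t)
    rw [hs t, Real.sq_sqrt hq, ← Real.log_mul (hBpos t).det_pos.ne' (by positivity), hBs t]
    exact Real.log_le_log (by have := (hBpos t).det_pos; positivity)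
      ((hBpos t).det_mul_one_add_le_det_add_vecMulVec_add (hE t) (X t))
  induction T with
  | zero => simp [hB0, Real.log_pow]
  | succ T ih => rw [sum_range_succ]; linarith [hstep T]

/-- log-determinant lower bound (design-matrix recursion, 0-indexed:
`B 0 = λ l I`, `B (t+1) = B t + X_t X_tᵀ + E_t` for `t = 0, …, T-1`). -/
theorem stmt_10 (d T : ℕ) (hd : 1 ≤ d) (lam l : ℝ) (hlam : 0 < lam) (hl : 0 < l)
    (X : ℕ → Fin d → ℝ) (E : ℕ → Matrix (Fin d) (Fin d) ℝ) (hE : ∀ t, (E t).PosSemidef)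
    (B : ℕ → Matrix (Fin d) (Fin d) ℝ)
    (hB0 : B 0 = (lam * l) • (1 : Matrix (Fin d) (Fin d) ℝ))
    (hBs : ∀ t, B (t + 1) = B t + vecMulVec (X t) (X t) + E t)
    (s : ℕ → ℝ) (hs : ∀ t, s t = Real.sqrt (X t ⬝ᵥ (B t)⁻¹.mulVec (X t))) :
    (d : ℝ) * Real.log (lam * l) + ∑ t ∈ Finset.range T, Real.log (1 + s t ^ 2) ≤
      Real.log (B T).det :=
  stmt_10_general d T lam l hlam hl X E hE B hB0 hBs s hs
end

section
/- Let d ≥ 1 and T ≥ 0 be integers and let λ > 0 and l > 0 be reals. Let X_1,…,X_T ∈ ℝ^d satisfy ‖X_t‖₂ ≤ 2 for all t, and let E_1,…,E_T ∈ ℝ^{d×d} be symmetric positive semidefinite matrices with trace(E_t) ≤ 4 for all t. Define B(1) = λ l I_d and B(t+1) = B(t) + X_t X_tᵀ + E_t for t = 1,…,T, and s_t = ‖X_t‖_{B(t)^{-1}}. Then Σ_{t=1}^T log(1 + s_t²) ≤ d log(1 + 8T/(d λ l)). -/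
/-!
Write `q t = X tᵀ B(t)⁻¹ X t = s t ²`. By the matrix determinant lemma
`det (B t + X t X tᵀ) = det (B t) (1 + q t)`, and adding the positive semidefinite `E t` can only
increase the determinant, so `∏ (1 + q t) ≤ det B(T) / det B(0)`. The determinant of a positive
semidefinite matrix is at most `(trace / d) ^ d` by AM-GM on its eigenvalues, and each step adds at
most `4 + 4` to the trace, so `det B(T) ≤ (λ l + 8 T / d) ^ d` while `det B(0) = (λ l) ^ d`.
-/

open Matrix Finset

theorem Real.prod_le_sum_div_card_pow {ι : Type*} (s : Finset ι) {z : ι → ℝ}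
    (hz : ∀ i ∈ s, 0 ≤ z i) : ∏ i ∈ s, z i ≤ ((∑ i ∈ s, z i) / #s) ^ #s := by
  rcases s.eq_empty_or_nonempty with rfl | hs
  · simp
  have hcard : (#s : ℝ) ≠ 0 := by exact_mod_cast hs.card_pos.ne'
  have amgm := Real.geom_mean_le_arith_mean_weighted s (fun _ => (#s : ℝ)⁻¹) z
    (fun _ _ => by positivity) (by simp [hcard]) hz
  rw [Real.finsetProd_rpow s z hz, ← Finset.mul_sum, inv_mul_eq_div] at amgm
  calc ∏ i ∈ s, z i = ((∏ i ∈ s, z i) ^ ((#s : ℕ) : ℝ)⁻¹) ^ #s :=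
        (Real.rpow_inv_natCast_pow (prod_nonneg hz) hs.card_pos.ne').symm
    _ ≤ ((∑ i ∈ s, z i) / #s) ^ #s :=
      pow_le_pow_left₀ (Real.rpow_nonneg (prod_nonneg hz) _) amgm _

namespace Matrix

variable {n : Type*} [Fintype n]

theorem trace_le_of_succ_eq_add_vecMulVec_add {B E : ℕ → Matrix n n ℝ} {x : ℕ → n → ℝ}
    {a b : ℝ} (hx : ∀ t, x t ⬝ᵥ x t ≤ a) (hE : ∀ t, (E t).trace ≤ b)
    (hBs : ∀ t, B (t + 1) = B t + vecMulVec (x t) (x t) + E t) (t : ℕ) :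
    (B t).trace ≤ (B 0).trace + (a + b) * t := by
  induction t with
  | zero => simp
  | succ t ih =>
    rw [hBs t, trace_add, trace_add, trace_vecMulVec]
    push_cast
    linarith [hx t, hE t]

theorem posDef_of_succ_eq_add_vecMulVec_add {B E : ℕ → Matrix n n ℝ} {x : ℕ → n → ℝ}
    (hB0 : (B 0).PosDef) (hE : ∀ t, (E t).PosSemidef)
    (hBs : ∀ t, B (t + 1) = B t + vecMulVec (x t) (x t) + E t) (t : ℕ) : (B t).PosDef := by
  induction t with
  | zero => exact hB0
  | succ t ih =>
    rw [hBs t]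
    exact (ih.add_posSemidef (posSemidef_vecMulVec_self_star (x t))).add_posSemidef (hE t)

variable [DecidableEq n]

theorem det_add_vecMulVec_s11 {α : Type*} [CommRing α] {A : Matrix n n α} (hA : IsUnit A.det)
    (u v : n → α) : (A + vecMulVec u v).det = A.det * (1 + v ⬝ᵥ A⁻¹ *ᵥ u) := by
  rw [vecMulVec_eq Unit, det_add_replicateCol_mul_replicateRow hA, Matrix.mul_assoc,
    ← replicateCol_mulVec, det_one_add_mul_comm, det_one_add_replicateCol_mul_replicateRow]

theorem PosSemidef.one_le_det_one_add_s11 {M : Matrix n n ℝ} (hM : M.PosSemidef) :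
    1 ≤ (1 + M).det := by
  have : IsSelfAdjoint M := hM.1
  have h : 1 + M = cfc (fun x : ℝ => 1 + x) M := by
    rw [cfc_add .., cfc_const_one .., cfc_id' ..]
  rw [h, hM.1.cfc_eq, IsHermitian.cfc]
  simp only [det_map, det_diagonal, Function.comp_apply, RCLike.ofReal_real_eq_id, id]
  exact Finset.one_le_prod fun i _ => le_add_of_nonneg_right (hM.eigenvalues_nonneg i)

open scoped MatrixOrder in
theorem PosDef.det_le_det_add_s11 {A E : Matrix n n ℝ} (hA : A.PosDef) (hE : E.PosSemidef) :
    A.det ≤ (A + E).det := by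
  obtain ⟨C, hC⟩ := CStarAlgebra.nonneg_iff_eq_star_mul_self.mp hA.inv.posSemidef.nonneg
  calc A.det = A.det * 1 := (mul_one _).symm
    _ ≤ A.det * (1 + C * E * Cᴴ).det :=
      mul_le_mul_of_nonneg_left (hE.mul_mul_conjTranspose_same C).one_le_det_one_add_s11
        hA.det_pos.le
    -- `det (1 + C (E Cᴴ)) = det (1 + E Cᴴ C) = det (1 + E A⁻¹)`
    _ = (A + E).det := by
      rw [Matrix.mul_assoc, det_one_add_mul_comm, Matrix.mul_assoc, ← star_eq_conjTranspose,
        ← hC, ← Matrix.mul_one (E * A⁻¹), ← det_add_mul _ _ hA.det_pos.ne'.isUnit,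
        Matrix.one_mul]

theorem PosSemidef.det_le_trace_div_card_pow {A : Matrix n n ℝ} (hA : A.PosSemidef) :
    A.det ≤ (A.trace / Fintype.card n) ^ Fintype.card n := by
  rw [hA.1.det_eq_prod_eigenvalues, hA.1.trace_eq_sum_eigenvalues]
  simpa using Real.prod_le_sum_div_card_pow univ fun i _ => hA.eigenvalues_nonneg i

theorem PosDef.dotProduct_inv_mulVec_nonneg {A : Matrix n n ℝ} (hA : A.PosDef) (x : n → ℝ) :
    0 ≤ x ⬝ᵥ A⁻¹ *ᵥ x := by
  simpa using hA.inv.posSemidef.dotProduct_mulVec_nonneg x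

theorem det_mul_prod_le_det_of_succ_eq_add_vecMulVec_add {B E : ℕ → Matrix n n ℝ}
    {x : ℕ → n → ℝ} (hB0 : (B 0).PosDef) (hE : ∀ t, (E t).PosSemidef)
    (hBs : ∀ t, B (t + 1) = B t + vecMulVec (x t) (x t) + E t) (T : ℕ) :
    (B 0).det * ∏ t ∈ range T, (1 + x t ⬝ᵥ (B t)⁻¹ *ᵥ x t) ≤ (B T).det := by
  have hB := posDef_of_succ_eq_add_vecMulVec_add hB0 hE hBs
  induction T with
  | zero => simp
  | succ T ih =>
    have hstep : (B T + vecMulVec (x T) (x T)).det =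
        (B T).det * (1 + x T ⬝ᵥ (B T)⁻¹ *ᵥ x T) :=
      det_add_vecMulVec_s11 (hB T).det_pos.ne'.isUnit _ _
    calc (B 0).det * ∏ t ∈ range (T + 1), (1 + x t ⬝ᵥ (B t)⁻¹ *ᵥ x t)
        = ((B 0).det * ∏ t ∈ range T, (1 + x t ⬝ᵥ (B t)⁻¹ *ᵥ x t)) *
            (1 + x T ⬝ᵥ (B T)⁻¹ *ᵥ x T) := by rw [prod_range_succ, mul_assoc]
      _ ≤ (B T).det * (1 + x T ⬝ᵥ (B T)⁻¹ *ᵥ x T) :=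
        mul_le_mul_of_nonneg_right ih (by linarith [(hB T).dotProduct_inv_mulVec_nonneg (x T)])
      _ ≤ (B (T + 1)).det := by
        rw [← hstep, hBs T]
        exact ((hB T).add_posSemidef (posSemidef_vecMulVec_self_star (x T))).det_le_det_add_s11 (hE T)

theorem sum_log_one_add_le_log_det_div_of_succ_eq_add_vecMulVec_add {B E : ℕ → Matrix n n ℝ}
    {x : ℕ → n → ℝ} (hB0 : (B 0).PosDef) (hE : ∀ t, (E t).PosSemidef)
    (hBs : ∀ t, B (t + 1) = B t + vecMulVec (x t) (x t) + E t) (T : ℕ) :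
    ∑ t ∈ range T, Real.log (1 + x t ⬝ᵥ (B t)⁻¹ *ᵥ x t) ≤
      Real.log ((B T).det / (B 0).det) := by
  have hB := posDef_of_succ_eq_add_vecMulVec_add hB0 hE hBs
  have hpos (t : ℕ) : 0 < 1 + x t ⬝ᵥ (B t)⁻¹ *ᵥ x t := by
    linarith [(hB t).dotProduct_inv_mulVec_nonneg (x t)]
  rw [← Real.log_prod fun t _ => (hpos t).ne']
  refine Real.log_le_log (prod_pos fun t _ => hpos t) ?_
  rw [le_div_iff₀' hB0.det_pos]
  exact det_mul_prod_le_det_of_succ_eq_add_vecMulVec_add hB0 hE hBs T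

end Matrix

/-- `Σ_t log(1 + s_t²) ≤ d log(1 + 8T/(dλl))` (0-indexed recursion). -/
theorem stmt_11 (d T : ℕ) (hd : 1 ≤ d) (lam l : ℝ) (hlam : 0 < lam) (hl : 0 < l)
    (X : ℕ → Fin d → ℝ) (hX : ∀ t, Real.sqrt (X t ⬝ᵥ X t) ≤ 2)
    (E : ℕ → Matrix (Fin d) (Fin d) ℝ) (hE : ∀ t, (E t).PosSemidef)
    (htr : ∀ t, (E t).trace ≤ 4)
    (B : ℕ → Matrix (Fin d) (Fin d) ℝ)
    (hB0 : B 0 = (lam * l) • (1 : Matrix (Fin d) (Fin d) ℝ))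
    (hBs : ∀ t, B (t + 1) = B t + vecMulVec (X t) (X t) + E t)
    (s : ℕ → ℝ) (hs : ∀ t, s t = Real.sqrt (X t ⬝ᵥ (B t)⁻¹.mulVec (X t))) :
    ∑ t ∈ Finset.range T, Real.log (1 + s t ^ 2) ≤
      (d : ℝ) * Real.log (1 + 8 * T / (d * lam * l)) := by
  have hll : 0 < lam * l := mul_pos hlam hl
  have hd' : (0 : ℝ) < d := by exact_mod_cast hd
  have hB0pos : (B 0).PosDef := hB0 ▸ PosDef.one.smul hll
  have hBpos := posDef_of_succ_eq_add_vecMulVec_add hB0pos hE hBs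
  have hs2 (t : ℕ) : s t ^ 2 = X t ⬝ᵥ (B t)⁻¹ *ᵥ X t := by
    rw [hs t, Real.sq_sqrt ((hBpos t).dotProduct_inv_mulVec_nonneg (X t))]
  have hdet0 : (B 0).det = (lam * l) ^ d := by
    rw [hB0, det_smul, det_one, mul_one, Fintype.card_fin]
  have hmean : (B T).trace / d ≤ lam * l * (1 + 8 * T / (d * lam * l)) := by
    have := trace_le_of_succ_eq_add_vecMulVec_add (fun t => (Real.sqrt_le_iff.mp (hX t)).2)
      htr hBs T
    rw [hB0, trace_smul, trace_one, Fintype.card_fin, smul_eq_mul] at this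
    rw [div_le_iff₀ hd']
    field_simp
    linarith
  have hdetT : (B T).det ≤ (lam * l) ^ d * (1 + 8 * T / (d * lam * l)) ^ d := by
    rw [← mul_pow]
    refine (hBpos T).posSemidef.det_le_trace_div_card_pow.trans ?_
    rw [Fintype.card_fin]
    exact pow_le_pow_left₀ (div_nonneg (hBpos T).posSemidef.trace_nonneg hd'.le) hmean d
  calc ∑ t ∈ range T, Real.log (1 + s t ^ 2)
      = ∑ t ∈ range T, Real.log (1 + X t ⬝ᵥ (B t)⁻¹ *ᵥ X t) := by simp only [hs2]
    _ ≤ Real.log ((B T).det / (B 0).det) :=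
      sum_log_one_add_le_log_det_div_of_succ_eq_add_vecMulVec_add hB0pos hE hBs T
    _ ≤ Real.log ((1 + 8 * T / (d * lam * l)) ^ d) := by
      refine Real.log_le_log (div_pos (hBpos T).det_pos hB0pos.det_pos) ?_
      rwa [hdet0, div_le_iff₀' (by positivity)]
    _ = d * Real.log (1 + 8 * T / (d * lam * l)) := Real.log_pow _ _
end

section
/- Let (Ω, F, P) be a standard Borel probability space with a filtration F_0 ⊆ F_1 ⊆ … ⊆ F_t ⊆ F. For τ = 1,…,t let X_τ : Ω → ℝ^d and c_τ : Ω → ℝ be F_τ-measurable random variables such that: E(X_τ | F_{τ-1}) = 0 almost surely; X_τ and c_τ are conditionally independent given F_{τ-1}; ‖X_τ‖₂ ≤ B almost surely for a constant B; and |c_τ| ≤ 1 almost surely. Then for every u ∈ ℝ^d, E[ exp( uᵀ Σ_{τ=1}^t X_τ c_τ − (1/2) ( Σ_{τ=1}^t (uᵀ X_τ)² + Σ_{τ=1}^t E( (uᵀ X_τ)² | F_{τ-1} ) ) ) ] ≤ 1. -/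
open Matrix MeasureTheory ProbabilityTheory Finset

/-!
Write `z_τ = uᵀ X_τ` and `M_τ = E(z_τ² | F_{τ-1})`. For `|c| ≤ 1` the map `a ↦ exp (a z - z²/2)`
is convex, so on `[-1, 1]` it lies below its chord, and `exp (±z - z²/2) ≤ 1 ± z + z²/2` turns the
chord into `exp (c z - z²/2) ≤ 1 + c z + z²/2`. Conditionally on `F_{τ-1}`, independence gives
`E(c_τ z_τ | F_{τ-1}) = E(c_τ | F_{τ-1}) E(z_τ | F_{τ-1}) = 0`, hence
`E(exp (c_τ z_τ - z_τ²/2) | F_{τ-1}) ≤ 1 + M_τ/2 ≤ exp (M_τ/2)`. So every factor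
`exp (c_τ z_τ - (z_τ² + M_τ)/2)` has conditional expectation at most `1`, and the expectation of
their product is at most `1` by peeling off the factors one at a time, last first.
-/

namespace Real

lemma exp_sub_sq_div_two_le (x : ℝ) : exp (x - x ^ 2 / 2) ≤ 1 + x + x ^ 2 / 2 := by
  have hinv : 1 - x + x ^ 2 / 2 ≤ (exp (x - x ^ 2 / 2))⁻¹ := by
    rw [← exp_neg]
    linarith [add_one_le_exp (-(x - x ^ 2 / 2))]
  have hprod : 1 ≤ (1 + x + x ^ 2 / 2) * (1 - x + x ^ 2 / 2) := by nlinarith [sq_nonneg (x ^ 2)]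
  have hpos : 0 < 1 + x + x ^ 2 / 2 := by nlinarith [sq_nonneg (x + 1)]
  calc exp (x - x ^ 2 / 2) ≤ exp (x - x ^ 2 / 2) * ((1 + x + x ^ 2 / 2) * (1 - x + x ^ 2 / 2)) :=
        le_mul_of_one_le_right (exp_pos _).le hprod
    _ ≤ exp (x - x ^ 2 / 2) * ((1 + x + x ^ 2 / 2) * (exp (x - x ^ 2 / 2))⁻¹) := by gcongr
    _ = 1 + x + x ^ 2 / 2 := by field_simp

lemma exp_mul_sub_sq_div_two_le {a : ℝ} (ha : |a| ≤ 1) (x : ℝ) :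
    exp (a * x - x ^ 2 / 2) ≤ 1 + a * x + x ^ 2 / 2 := by
  obtain ⟨ha₁, ha₂⟩ := abs_le.1 ha
  have hconv := convexOn_exp.2 (Set.mem_univ (x - x ^ 2 / 2)) (Set.mem_univ (-x - (-x) ^ 2 / 2))
    (by linarith : 0 ≤ (1 + a) / 2) (by linarith : 0 ≤ (1 - a) / 2) (by ring)
  simp only [smul_eq_mul] at hconv
  calc exp (a * x - x ^ 2 / 2)
      = exp ((1 + a) / 2 * (x - x ^ 2 / 2) + (1 - a) / 2 * (-x - (-x) ^ 2 / 2)) := by ring_nf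
    _ ≤ (1 + a) / 2 * exp (x - x ^ 2 / 2) + (1 - a) / 2 * exp (-x - (-x) ^ 2 / 2) := hconv
    _ ≤ (1 + a) / 2 * (1 + x + x ^ 2 / 2) + (1 - a) / 2 * (1 + -x + (-x) ^ 2 / 2) :=
      add_le_add (mul_le_mul_of_nonneg_left (exp_sub_sq_div_two_le x) (by linarith))
        (mul_le_mul_of_nonneg_left (exp_sub_sq_div_two_le (-x)) (by linarith))
    _ = 1 + a * x + x ^ 2 / 2 := by ring

lemma mul_sub_sq_div_two_le {a : ℝ} (ha : |a| ≤ 1) (x : ℝ) : a * x - x ^ 2 / 2 ≤ 1 / 2 := by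
  have : a * x ≤ |x| :=
    (le_abs_self _).trans (by rw [abs_mul]; exact mul_le_of_le_one_left (abs_nonneg _) ha)
  nlinarith [sq_abs x, sq_nonneg (|x| - 1)]

end Real

lemma norm_le_sqrt_dotProduct_self {ι : Type*} [Fintype ι] (v : ι → ℝ) : ‖v‖ ≤ √(v ⬝ᵥ v) := by
  refine (pi_norm_le_iff_of_nonneg (Real.sqrt_nonneg _)).2 fun i ↦ ?_
  rw [Real.norm_eq_abs, ← Real.sqrt_sq_eq_abs, sq]
  exact Real.sqrt_le_sqrt
    (single_le_sum (f := fun j ↦ v j * v j) (fun j _ ↦ mul_self_nonneg (v j)) (mem_univ i))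

section

variable {Ω : Type*} {m mΩ : MeasurableSpace Ω} {μ : Measure Ω}

lemma MeasureTheory.MemLp.finsetProd_top {ι : Type*} {s : Finset ι} {f : ι → Ω → ℝ}
    (hf : ∀ i ∈ s, MemLp (f i) ⊤ μ) : MemLp (fun ω ↦ ∏ i ∈ s, f i ω) ⊤ μ := by
  simpa using MemLp.prod' (p := fun _ ↦ ⊤) hf

lemma ProbabilityTheory.CondIndepFun.ae_indepFun_condExpKernel {β γ : Type*} [StandardBorelSpace Ω]
    [IsFiniteMeasure μ] [MeasurableSpace β] [MeasurableSpace γ]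
    [MeasurableSpace.CountableOrCountablyGenerated Ω (β × γ)]
    {hm : m ≤ mΩ} {f : Ω → β} {g : Ω → γ} (hf : Measurable f) (hg : Measurable g)
    (h : CondIndepFun m hm f g μ) :
    ∀ᵐ ω ∂μ, IndepFun f g (condExpKernel μ m ω) := by
  rw [condIndepFun_iff_map_prod_eq_prod_map_map hf hg] at h
  filter_upwards [ae_of_ae_trim hm h] with ω hω
  rw [indepFun_iff_map_prod_eq_prod_map_map hf.aemeasurable hg.aemeasurable]
  simpa [Kernel.map_apply _ (hf.prodMk hg), Kernel.map_apply _ hf, Kernel.map_apply _ hg,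
    Kernel.prod_apply] using hω

lemma ProbabilityTheory.CondIndepFun.condExp_mul_ae_eq [StandardBorelSpace Ω] [IsFiniteMeasure μ]
    {hm : m ≤ mΩ} {f g : Ω → ℝ} (hf : Measurable f) (hg : Measurable g)
    (hfi : Integrable f μ) (hgi : Integrable g μ) (hfgi : Integrable (f * g) μ)
    (h : CondIndepFun m hm f g μ) :
    μ[f * g | m] =ᵐ[μ] μ[f | m] * μ[g | m] := by
  filter_upwards [h.ae_indepFun_condExpKernel hf hg, condExp_ae_eq_integral_condExpKernel hm hfgi,
    condExp_ae_eq_integral_condExpKernel hm hfi, condExp_ae_eq_integral_condExpKernel hm hgi]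
    with ω hω hfg hf' hg'
  rw [hfg, Pi.mul_apply, hf', hg']
  exact hω.integral_mul_eq_mul_integral hf.aestronglyMeasurable hg.aestronglyMeasurable

lemma memLp_top_exp_mul_sub_sq_add_condExp {z c : Ω → ℝ} (hm : m ≤ mΩ) (hz : Measurable z)
    (hc : Measurable c) (hc₁ : ∀ᵐ ω ∂μ, |c ω| ≤ 1) :
    MemLp (fun ω ↦ Real.exp (c ω * z ω - (z ω ^ 2 + μ[fun ω ↦ z ω ^ 2 | m] ω) / 2)) ⊤ μ := by
  have hM_meas : Measurable (μ[fun ω ↦ z ω ^ 2 | m]) :=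
    (stronglyMeasurable_condExp.mono hm).measurable
  have hM : 0 ≤ᵐ[μ] μ[fun ω ↦ z ω ^ 2 | m] := condExp_nonneg (ae_of_all _ fun ω ↦ sq_nonneg _)
  refine memLp_top_of_bound (Measurable.aestronglyMeasurable (by fun_prop)) (Real.exp (1 / 2)) ?_
  filter_upwards [hc₁, hM] with ω hcω hMω
  have hMω : (0 : ℝ) ≤ _ := hMω
  rw [Real.norm_of_nonneg (Real.exp_pos _).le, Real.exp_le_exp]
  linarith [Real.mul_sub_sq_div_two_le hcω (z ω)]

lemma condExp_one_add_mul_add_sq_div_two_ae_eq [StandardBorelSpace Ω] [IsProbabilityMeasure μ]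
    {z c : Ω → ℝ} (hm : m ≤ mΩ) (hz : Measurable z) (hc : Measurable c) (hz₂ : MemLp z 2 μ)
    (hc₁ : ∀ᵐ ω ∂μ, |c ω| ≤ 1) (hz₀ : μ[z | m] =ᵐ[μ] 0) (hzc : CondIndepFun m hm z c μ) :
    μ[fun ω ↦ 1 + c ω * z ω + z ω ^ 2 / 2 | m] =ᵐ[μ]
      fun ω ↦ 1 + μ[fun ω ↦ z ω ^ 2 | m] ω / 2 := by
  have hzi : Integrable z μ := hz₂.integrable one_le_two
  have hz2i : Integrable (fun ω ↦ z ω ^ 2) μ := hz₂.integrable_sq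
  have hci : Integrable c μ := .of_bound hc.aestronglyMeasurable 1 hc₁
  have hczi : Integrable (fun ω ↦ c ω * z ω) μ := hzi.bdd_mul hc.aestronglyMeasurable hc₁
  have hcz : μ[fun ω ↦ c ω * z ω | m] =ᵐ[μ] 0 := by
    filter_upwards [hzc.symm.condExp_mul_ae_eq hc hz hci hzi hczi, hz₀] with ω h h₀
    change μ[c * z | m] ω = 0
    rw [h, Pi.mul_apply, h₀, Pi.zero_apply, mul_zero]
  have e₁ : μ[fun ω ↦ 1 + c ω * z ω + z ω ^ 2 / 2 | m] =ᵐ[μ]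
      μ[fun ω ↦ 1 + c ω * z ω | m] + μ[fun ω ↦ z ω ^ 2 / 2 | m] :=
    condExp_add ((integrable_const 1).add hczi) (hz2i.div_const 2) m
  have e₂ : μ[fun ω ↦ 1 + c ω * z ω | m] =ᵐ[μ]
      μ[fun _ ↦ (1 : ℝ) | m] + μ[fun ω ↦ c ω * z ω | m] :=
    condExp_add (integrable_const 1) hczi m
  have e₃ : μ[fun ω ↦ z ω ^ 2 / 2 | m] =ᵐ[μ] (2⁻¹ : ℝ) • μ[fun ω ↦ z ω ^ 2 | m] := by
    have : (fun ω ↦ z ω ^ 2 / 2) = (2⁻¹ : ℝ) • fun ω ↦ z ω ^ 2 := by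
      ext ω
      rw [Pi.smul_apply, smul_eq_mul, div_eq_inv_mul]
    rw [this]
    exact condExp_smul _ _ m
  filter_upwards [e₁, e₂, e₃, hcz] with ω h₁ h₂ h₃ h₄
  simp only [h₁, Pi.add_apply, h₂, condExp_const hm, h₃, h₄, Pi.smul_apply, smul_eq_mul,
    Pi.zero_apply]
  ring

theorem condExp_exp_mul_sub_sq_add_condExp_le_one [StandardBorelSpace Ω] [IsProbabilityMeasure μ]
    {z c : Ω → ℝ} (hm : m ≤ mΩ) (hz : Measurable z) (hc : Measurable c) (hz₂ : MemLp z 2 μ)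
    (hc₁ : ∀ᵐ ω ∂μ, |c ω| ≤ 1) (hz₀ : μ[z | m] =ᵐ[μ] 0) (hzc : CondIndepFun m hm z c μ) :
    μ[fun ω ↦ Real.exp (c ω * z ω - (z ω ^ 2 + μ[fun ω ↦ z ω ^ 2 | m] ω) / 2) | m] ≤ᵐ[μ] 1 := by
  set M := μ[fun ω ↦ z ω ^ 2 | m]
  have hWi : Integrable (fun ω ↦ Real.exp (c ω * z ω - z ω ^ 2 / 2)) μ := by
    refine .of_bound (by fun_prop) (Real.exp (1 / 2)) (hc₁.mono fun ω hω ↦ ?_)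
    rw [Real.norm_of_nonneg (Real.exp_pos _).le, Real.exp_le_exp]
    exact Real.mul_sub_sq_div_two_le hω (z ω)
  have hpull : μ[fun ω ↦ Real.exp (c ω * z ω - (z ω ^ 2 + M ω) / 2) | m] =ᵐ[μ]
      fun ω ↦ Real.exp (-M ω / 2) * μ[fun ω ↦ Real.exp (c ω * z ω - z ω ^ 2 / 2) | m] ω := by
    have hsplit : (fun ω ↦ Real.exp (c ω * z ω - (z ω ^ 2 + M ω) / 2)) =
        fun ω ↦ Real.exp (-M ω / 2) * Real.exp (c ω * z ω - z ω ^ 2 / 2) := by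
      ext ω
      rw [← Real.exp_add]
      ring_nf
    have hint := (memLp_top_exp_mul_sub_sq_add_condExp hm hz hc hc₁).integrable le_top
    rw [hsplit] at hint ⊢
    exact condExp_mul_of_stronglyMeasurable_left
      ((Real.continuous_exp.comp (continuous_neg.div_const 2)).comp_stronglyMeasurable
        stronglyMeasurable_condExp) hint hWi
  have hquad : μ[fun ω ↦ Real.exp (c ω * z ω - z ω ^ 2 / 2) | m] ≤ᵐ[μ]
      μ[fun ω ↦ 1 + c ω * z ω + z ω ^ 2 / 2 | m] := by
    have hczi : Integrable (fun ω ↦ c ω * z ω) μ :=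
      (hz₂.integrable one_le_two).bdd_mul hc.aestronglyMeasurable hc₁
    exact condExp_mono hWi (((integrable_const 1).add hczi).add (hz₂.integrable_sq.div_const 2))
      (hc₁.mono fun ω hω ↦ Real.exp_mul_sub_sq_div_two_le hω (z ω))
  filter_upwards [hpull, hquad, condExp_one_add_mul_add_sq_div_two_ae_eq hm hz hc hz₂ hc₁ hz₀ hzc]
    with ω h₁ h₂ h₃
  rw [h₁, Pi.one_apply]
  calc Real.exp (-M ω / 2) * μ[fun ω ↦ Real.exp (c ω * z ω - z ω ^ 2 / 2) | m] ω
      ≤ Real.exp (-M ω / 2) * (1 + M ω / 2) := by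
        gcongr
        exact h₂.trans h₃.le
    _ ≤ 1 := by
      rw [neg_div, Real.exp_neg, inv_mul_le_iff₀ (Real.exp_pos _), mul_one, add_comm]
      exact Real.add_one_le_exp _

theorem integral_prod_le_one_of_condExp_le_one [IsProbabilityMeasure μ] {ℱ : Filtration ℕ mΩ}
    {V : ℕ → Ω → ℝ} (t : ℕ)
    (hV_meas : ∀ τ ∈ Icc 1 t, StronglyMeasurable[ℱ τ] (V τ))
    (hV_bdd : ∀ τ ∈ Icc 1 t, MemLp (V τ) ⊤ μ)
    (hV_nonneg : ∀ τ ∈ Icc 1 t, 0 ≤ᵐ[μ] V τ)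
    (hV_cond : ∀ τ ∈ Icc 1 t, μ[V τ | ℱ (τ - 1)] ≤ᵐ[μ] 1) :
    ∫ ω, ∏ τ ∈ Icc 1 t, V τ ω ∂μ ≤ 1 := by
  induction t with
  | zero => simp
  | succ t ih =>
    have hsub : Icc 1 t ⊆ Icc 1 (t + 1) := Icc_subset_Icc_right t.le_succ
    have hlast : t + 1 ∈ Icc 1 (t + 1) := by simp
    set G := fun ω ↦ ∏ τ ∈ Icc 1 t, V τ ω
    have hG_meas : StronglyMeasurable[ℱ t] G :=
      Finset.stronglyMeasurable_fun_prod _ fun τ hτ ↦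
        (hV_meas τ (hsub hτ)).mono (ℱ.mono (mem_Icc.1 hτ).2)
    have hG_top : MemLp G ⊤ μ := MemLp.finsetProd_top fun τ hτ ↦ hV_bdd τ (hsub hτ)
    have hG_nonneg : 0 ≤ᵐ[μ] G := by
      filter_upwards [(Filter.eventually_all_finset _).2 fun τ hτ ↦ hV_nonneg τ (hsub hτ)]
        with ω hω
      exact prod_nonneg hω
    have hV_int : Integrable (V (t + 1)) μ := (hV_bdd _ hlast).integrable le_top
    have hGV_int : Integrable (G * V (t + 1)) μ := ((hV_bdd _ hlast).mul hG_top).integrable le_top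
    calc ∫ ω, ∏ τ ∈ Icc 1 (t + 1), V τ ω ∂μ
        = ∫ ω, μ[G * V (t + 1) | ℱ t] ω ∂μ := by
          rw [integral_condExp (ℱ.le t)]
          simp only [prod_Icc_succ_top (Nat.le_add_left 1 t), Pi.mul_apply, G]
      _ ≤ ∫ ω, G ω ∂μ := by
          refine integral_mono_ae integrable_condExp (hG_top.integrable le_top) ?_
          filter_upwards [condExp_mul_of_stronglyMeasurable_left hG_meas hGV_int hV_int,
            hV_cond _ hlast, hG_nonneg] with ω h h₁ h₀
          rw [h, Pi.mul_apply]
          exact mul_le_of_le_one_right h₀ h₁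
      _ ≤ 1 := ih (fun τ hτ ↦ hV_meas τ (hsub hτ)) (fun τ hτ ↦ hV_bdd τ (hsub hτ))
          (fun τ hτ ↦ hV_nonneg τ (hsub hτ)) (fun τ hτ ↦ hV_cond τ (hsub hτ))

theorem lintegral_exp_sum_mul_sub_sq_add_condExp_le_one [StandardBorelSpace Ω]
    [IsProbabilityMeasure μ] {ℱ : Filtration ℕ mΩ} {z c : ℕ → Ω → ℝ} (t : ℕ)
    (hz_meas : ∀ τ ∈ Icc 1 t, Measurable[ℱ τ] (z τ))
    (hc_meas : ∀ τ ∈ Icc 1 t, Measurable[ℱ τ] (c τ))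
    (hz₂ : ∀ τ ∈ Icc 1 t, MemLp (z τ) 2 μ)
    (hc₁ : ∀ τ ∈ Icc 1 t, ∀ᵐ ω ∂μ, |c τ ω| ≤ 1)
    (hz₀ : ∀ τ ∈ Icc 1 t, μ[z τ | ℱ (τ - 1)] =ᵐ[μ] 0)
    (hzc : ∀ τ ∈ Icc 1 t, CondIndepFun (ℱ (τ - 1)) (ℱ.le (τ - 1)) (z τ) (c τ) μ) :
    ∫⁻ ω, ENNReal.ofReal (Real.exp (∑ τ ∈ Icc 1 t,
      (c τ ω * z τ ω - (z τ ω ^ 2 + μ[fun ω ↦ z τ ω ^ 2 | ℱ (τ - 1)] ω) / 2))) ∂μ ≤ 1 := by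
  set V := fun τ ω ↦
    Real.exp (c τ ω * z τ ω - (z τ ω ^ 2 + μ[fun ω ↦ z τ ω ^ 2 | ℱ (τ - 1)] ω) / 2)
  have hV_meas : ∀ τ ∈ Icc 1 t, Measurable[ℱ τ] (V τ) := fun τ hτ ↦ by
    have hz := hz_meas τ hτ
    have hc := hc_meas τ hτ
    have hM : Measurable[ℱ τ] (μ[fun ω ↦ z τ ω ^ 2 | ℱ (τ - 1)]) :=
      (stronglyMeasurable_condExp.mono (ℱ.mono (Nat.sub_le τ 1))).measurable
    fun_prop
  have hV_top : ∀ τ ∈ Icc 1 t, MemLp (V τ) ⊤ μ := fun τ hτ ↦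
    memLp_top_exp_mul_sub_sq_add_condExp (ℱ.le _) ((hz_meas τ hτ).mono (ℱ.le τ) le_rfl)
      ((hc_meas τ hτ).mono (ℱ.le τ) le_rfl) (hc₁ τ hτ)
  simp_rw [Real.exp_sum]
  rw [← ofReal_integral_eq_lintegral_ofReal ((MemLp.finsetProd_top hV_top).integrable le_top)
    (ae_of_all _ fun ω ↦ prod_nonneg fun τ _ ↦ (Real.exp_pos _).le)]
  refine ENNReal.ofReal_le_one.2 (integral_prod_le_one_of_condExp_le_one t
    (fun τ hτ ↦ (hV_meas τ hτ).stronglyMeasurable) hV_top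
    (fun τ _ ↦ ae_of_all _ fun ω ↦ (Real.exp_pos _).le) fun τ hτ ↦ ?_)
  exact condExp_exp_mul_sub_sq_add_condExp_le_one _ ((hz_meas τ hτ).mono (ℱ.le τ) le_rfl)
    ((hc_meas τ hτ).mono (ℱ.le τ) le_rfl) (hz₂ τ hτ) (hc₁ τ hτ) (hz₀ τ hτ) (hzc τ hτ)

end

theorem stmt_15_general {Ω : Type*} [mΩ : MeasurableSpace Ω] [StandardBorelSpace Ω]
    (P : Measure Ω) [IsProbabilityMeasure P]
    (d t : ℕ)
    (ℱ : Filtration ℕ mΩ)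
    (X : ℕ → Ω → Fin d → ℝ) (c : ℕ → Ω → ℝ) (B : ℝ)
    (hXmeas : ∀ τ ∈ Finset.Icc 1 t, Measurable[ℱ τ] (X τ))
    (hcmeas : ∀ τ ∈ Finset.Icc 1 t, Measurable[ℱ τ] (c τ))
    (hXcond : ∀ τ ∈ Finset.Icc 1 t, P[X τ | ℱ (τ - 1)] =ᵐ[P] 0)
    (hindep : ∀ τ ∈ Finset.Icc 1 t,
      CondIndepFun (ℱ (τ - 1)) (ℱ.le (τ - 1)) (X τ) (c τ) P)
    (hXbdd : ∀ τ ∈ Finset.Icc 1 t, ∀ᵐ ω ∂P, Real.sqrt (X τ ω ⬝ᵥ X τ ω) ≤ B)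
    (hcbdd : ∀ τ ∈ Finset.Icc 1 t, ∀ᵐ ω ∂P, |c τ ω| ≤ 1)
    (u : Fin d → ℝ) :
    ∫⁻ ω, ENNReal.ofReal (Real.exp
      (u ⬝ᵥ (∑ τ ∈ Finset.Icc 1 t, c τ ω • X τ ω) -
        (1 / 2) * ((∑ τ ∈ Finset.Icc 1 t, (u ⬝ᵥ X τ ω) ^ 2) +
          ∑ τ ∈ Finset.Icc 1 t,
            (P[fun ω' => (u ⬝ᵥ X τ ω') ^ 2 | ℱ (τ - 1)]) ω))) ∂P ≤ 1 := by
  let T : (Fin d → ℝ) →L[ℝ] ℝ := LinearMap.toContinuousLinearMap (dotProductBilin ℝ ℝ u)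
  have hX_top : ∀ τ ∈ Icc 1 t, MemLp (X τ) ⊤ P := fun τ hτ ↦
    memLp_top_of_bound ((hXmeas τ hτ).mono (ℱ.le τ) le_rfl).aestronglyMeasurable B
      ((hXbdd τ hτ).mono fun ω hω ↦ (norm_le_sqrt_dotProduct_self _).trans hω)
  convert lintegral_exp_sum_mul_sub_sq_add_condExp_le_one (z := fun τ ω ↦ u ⬝ᵥ X τ ω) t
    (fun τ hτ ↦ T.measurable.comp (hXmeas τ hτ)) hcmeas
    (fun τ hτ ↦ (T.comp_memLp' (hX_top τ hτ)).mono_exponent le_top) hcbdd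
    (fun τ hτ ↦ (T.comp_condExp_comm ((hX_top τ hτ).integrable le_top)).symm.trans
      ((hXcond τ hτ).mono fun ω h ↦ by simp [h]))
    (fun τ hτ ↦ (hindep τ hτ).comp T.measurable measurable_id) using 5 with ω
  simp only [dotProduct_sum, dotProduct_smul, smul_eq_mul, sum_sub_distrib, ← sum_div,
    sum_add_distrib]
  ring

/-- Lemma A.2 (de la Peña / Kim–Paik mgf bound) for conditionally
independent, bounded martingale-difference factors. -/
theorem stmt_15 {Ω : Type*} [mΩ : MeasurableSpace Ω] [StandardBorelSpace Ω]
    (P : Measure Ω) [IsProbabilityMeasure P]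
    (d t : ℕ) (hd : 1 ≤ d)
    (ℱ : Filtration ℕ mΩ)
    (X : ℕ → Ω → Fin d → ℝ) (c : ℕ → Ω → ℝ) (B : ℝ)
    (hXmeas : ∀ τ ∈ Finset.Icc 1 t, Measurable[ℱ τ] (X τ))
    (hcmeas : ∀ τ ∈ Finset.Icc 1 t, Measurable[ℱ τ] (c τ))
    (hXcond : ∀ τ ∈ Finset.Icc 1 t, P[X τ | ℱ (τ - 1)] =ᵐ[P] 0)
    (hindep : ∀ τ ∈ Finset.Icc 1 t,
      CondIndepFun (ℱ (τ - 1)) (ℱ.le (τ - 1)) (X τ) (c τ) P)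
    (hXbdd : ∀ τ ∈ Finset.Icc 1 t, ∀ᵐ ω ∂P, Real.sqrt (X τ ω ⬝ᵥ X τ ω) ≤ B)
    (hcbdd : ∀ τ ∈ Finset.Icc 1 t, ∀ᵐ ω ∂P, |c τ ω| ≤ 1)
    (u : Fin d → ℝ) :
    ∫⁻ ω, ENNReal.ofReal (Real.exp
      (u ⬝ᵥ (∑ τ ∈ Finset.Icc 1 t, c τ ω • X τ ω) -
        (1 / 2) * ((∑ τ ∈ Finset.Icc 1 t, (u ⬝ᵥ X τ ω) ^ 2) +
          ∑ τ ∈ Finset.Icc 1 t,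
            (P[fun ω' => (u ⬝ᵥ X τ ω') ^ 2 | ℱ (τ - 1)]) ω))) ∂P ≤ 1 :=
  stmt_15_general (mΩ := mΩ) P d t ℱ X c B hXmeas hcmeas hXcond hindep hXbdd hcbdd u
end
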